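/- arXiv:1203.3831 — 2 statements merged into one kernel-verified Lean document; each statement's English description precedes it below -/
import Mathlib

section
/- Let Ã be a real symmetric positive definite d×d matrix with eigenvalues α₁↑ ≤ α₂↑ ≤ … in increasing order. Then for any two orthonormal vectors v₁, v₂ in ℝ^d, ⟨v₁, Ã v₁⟩ · ⟨v₂, Ã v₂⟩ ≥ α₁↑ α₂↑. -/
open Matrix
open scoped ComplexOrder

open Classical in
/-- The eigenvalues of a matrix in increasing order (junk value `0` if not Hermitian). -/
noncomputable def eigUp {d : ℕ} (M : Matrix (Fin d) (Fin d) ℝ) : Fin d → ℝ :=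
  if h : M.IsHermitian then h.eigenvalues ∘ Tuple.sort h.eigenvalues else 0

/-- The eigenvalues of a matrix in decreasing order. -/
noncomputable def eigDown {d : ℕ} (M : Matrix (Fin d) (Fin d) ℝ) (j : Fin d) : ℝ :=
  eigUp M j.rev

/-- The standard symplectic form on `2n` canonical variables: block diagonal with
blocks `[[0,1],[-1,0]]`. -/
def Omega (n : ℕ) : Matrix (Fin (2*n)) (Fin (2*n)) ℝ :=
  Matrix.of fun i j =>
    if (i : ℕ) + 1 = (j : ℕ) ∧ (i : ℕ) % 2 = 0 then 1
    else if (j : ℕ) + 1 = (i : ℕ) ∧ (j : ℕ) % 2 = 0 then -1 else 0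

/-- Partial transposition matrix `T = 𝟙₂^{⊕ l} ⊕ σz^{⊕ (n-l)}` for the bipartition of the
first `l` versus the last `n - l` modes. -/
def Tmat (n l : ℕ) : Matrix (Fin (2*n)) (Fin (2*n)) ℝ :=
  Matrix.diagonal fun i => if (i : ℕ) / 2 < l ∨ (i : ℕ) % 2 = 0 then 1 else -1

/-- The partially transposed symplectic form `Ω̃ = T Ω T`. -/
def OmegaPT (n l : ℕ) : Matrix (Fin (2*n)) (Fin (2*n)) ℝ :=
  Tmat n l * Omega n * Tmat n l

open Classical in
/-- The positive square root of a positive semidefinite matrix (junk value `0` otherwise). -/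
noncomputable def msqrt {d : ℕ} (M : Matrix (Fin d) (Fin d) ℝ) : Matrix (Fin d) (Fin d) ℝ :=
  if h : M.PosSemidef then
    h.1.eigenvectorUnitary.1 * diagonal (Real.sqrt ∘ h.1.eigenvalues) *
      (star h.1.eigenvectorUnitary : Matrix (Fin d) (Fin d) ℝ) else 0

/-- `σ + iΩ ≥ 0`: the Robertson–Schrödinger condition for a real symmetric matrix `σ`
to be a bona fide covariance matrix. -/
def IsCM (n : ℕ) (σ : Matrix (Fin (2*n)) (Fin (2*n)) ℝ) : Prop :=
  σ.IsSymm ∧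
    (σ.map (Complex.ofReal ·) + Complex.I • (Omega n).map (Complex.ofReal ·)).PosSemidef

/-- `ν̃₋²`, the square of the smallest partially transposed symplectic eigenvalue of `σ`, for
the bipartition of the first `l` versus the remaining modes: the smallest eigenvalue of
`σ^{1/2} Ω̃ᵀ σ Ω̃ σ^{1/2}`. -/
noncomputable def nuSq (n l : ℕ) (σ : Matrix (Fin (2*n)) (Fin (2*n)) ℝ) : ℝ :=
  sInf (spectrum ℝ (msqrt σ * (OmegaPT n l)ᵀ * σ * OmegaPT n l * msqrt σ))

/-- `ν̃₋`, the smallest partially transposed symplectic eigenvalue of `σ`. -/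
noncomputable def nuMin (n l : ℕ) (σ : Matrix (Fin (2*n)) (Fin (2*n)) ℝ) : ℝ :=
  Real.sqrt (nuSq n l σ)

/-- The logarithmic negativity `E_N(σ) = max (0, −log₂ ν̃₋)`. -/
noncomputable def logNeg (n l : ℕ) (σ : Matrix (Fin (2*n)) (Fin (2*n)) ℝ) : ℝ :=
  max 0 (-(Real.logb 2 (nuMin n l σ)))

/-! In an orthonormal eigenbasis of `Ã` the Rayleigh quotient of a unit vector `v` is the convex
combination `∑ αᵢ wᵢ²`, hence at least `α₁↑ p + α₂↑ (1 - p)`, where `p` is the weight of `v` on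
the eigenvector of `α₁↑`. For orthonormal `v₁, v₂` Bessel's inequality gives `p₁ + p₂ ≤ 1`, and
`(α₁p₁ + α₂(1 - p₁))(α₁p₂ + α₂(1 - p₂)) - α₁α₂ = (1 - p₁ - p₂)(α₂ - α₁)α₂ + p₁p₂(α₂ - α₁)² ≥ 0`. -/

theorem mul_le_mul_of_interpolants_le {a b p q x y : ℝ} (ha : 0 ≤ a) (hab : a ≤ b)
    (hp : 0 ≤ p) (hq : 0 ≤ q) (hpq : p + q ≤ 1)
    (hx : a * p + b * (1 - p) ≤ x) (hy : a * q + b * (1 - q) ≤ y) : a * b ≤ x * y :=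
  calc a * b ≤ (a * p + b * (1 - p)) * (a * q + b * (1 - q)) := by
        have hgap : (a * p + b * (1 - p)) * (a * q + b * (1 - q)) - a * b =
            (1 - p - q) * (b - a) * b + p * q * (b - a) ^ 2 := by ring
        have hr : 0 ≤ 1 - p - q := by linarith
        nlinarith [mul_nonneg (mul_nonneg hr (sub_nonneg.mpr hab)) (ha.trans hab),
          mul_nonneg (mul_nonneg hp hq) (sq_nonneg (b - a))]
    _ ≤ x * y := by
        have hy₀ : 0 ≤ a * q + b * (1 - q) := by nlinarith
        have hx₀ : 0 ≤ x := by nlinarith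
        exact mul_le_mul hx hy hy₀ hx₀

section

variable {n : Type*} [Fintype n]

theorem sq_add_sq_le_of_orthonormal {w₁ w₂ : n → ℝ} (h₁ : w₁ ⬝ᵥ w₁ = 1) (h₂ : w₂ ⬝ᵥ w₂ = 1)
    (h₁₂ : w₁ ⬝ᵥ w₂ = 0) (x : n → ℝ) : (w₁ ⬝ᵥ x) ^ 2 + (w₂ ⬝ᵥ x) ^ 2 ≤ x ⬝ᵥ x := by
  set a := w₁ ⬝ᵥ x
  set b := w₂ ⬝ᵥ x
  have h₂₁ : w₂ ⬝ᵥ w₁ = 0 := by rw [dotProduct_comm, h₁₂]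
  have hx₁ : x ⬝ᵥ w₁ = a := dotProduct_comm _ _
  have hx₂ : x ⬝ᵥ w₂ = b := dotProduct_comm _ _
  -- the squared norm of the component of `x` orthogonal to `w₁` and `w₂`
  have := dotProduct_self_star_nonneg (x - a • w₁ - b • w₂)
  simp only [star_trivial, sub_dotProduct, dotProduct_sub, smul_dotProduct, dotProduct_smul,
    h₁, h₂, h₁₂, h₂₁, hx₁, hx₂, smul_eq_mul] at this
  nlinarith

theorem sq_add_sq_apply_le_one_of_orthonormal [DecidableEq n] {w₁ w₂ : n → ℝ}
    (h₁ : w₁ ⬝ᵥ w₁ = 1) (h₂ : w₂ ⬝ᵥ w₂ = 1) (h₁₂ : w₁ ⬝ᵥ w₂ = 0) (i : n) :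
    w₁ i ^ 2 + w₂ i ^ 2 ≤ 1 := by
  simpa using sq_add_sq_le_of_orthonormal h₁ h₂ h₁₂ (Pi.single i 1)

theorem dotProduct_mulVec_mulVec_of_mem_unitaryGroup [DecidableEq n] {U : Matrix n n ℝ}
    (hU : U ∈ unitaryGroup n ℝ) (x y : n → ℝ) : (U *ᵥ x) ⬝ᵥ (U *ᵥ y) = x ⬝ᵥ y := by
  have hUU : Uᵀ * U = 1 := by
    rw [← conjTranspose_eq_transpose_of_trivial, ← star_eq_conjTranspose]
    exact mem_unitaryGroup_iff'.mp hU
  rw [dotProduct_mulVec, ← mulVec_transpose, mulVec_mulVec, hUU, one_mulVec]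

theorem Matrix.IsHermitian.dotProduct_mulVec_self_eq_sum [DecidableEq n] {A : Matrix n n ℝ}
    (hA : A.IsHermitian) (v : n → ℝ) :
    v ⬝ᵥ A *ᵥ v =
      ∑ i, hA.eigenvalues i * (star (hA.eigenvectorUnitary : Matrix n n ℝ) *ᵥ v) i ^ 2 := by
  set U : Matrix n n ℝ := ↑hA.eigenvectorUnitary
  have hUt : Uᵀ = star U := by rw [star_eq_conjTranspose, conjTranspose_eq_transpose_of_trivial]
  conv_lhs => rw [hA.spectral_theorem, Unitary.conjStarAlgAut_apply]
  rw [← mulVec_mulVec, ← mulVec_mulVec, dotProduct_mulVec v U, ← mulVec_transpose, hUt]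
  simp only [dotProduct, mulVec_diagonal, Function.comp_apply, RCLike.ofReal_real_eq_id, id]
  exact Finset.sum_congr rfl fun i _ => by ring

theorem add_mul_one_sub_le_sum_mul_sq {μ w : n → ℝ} {i₀ : n} {b : ℝ}
    (hμ : ∀ i ≠ i₀, b ≤ μ i) (hw : w ⬝ᵥ w = 1) :
    μ i₀ * w i₀ ^ 2 + b * (1 - w i₀ ^ 2) ≤ ∑ i, μ i * w i ^ 2 := by
  classical
  have hsum : ∑ i, μ i * w i ^ 2 = b + ∑ i, (μ i - b) * w i ^ 2 := by
    have hw' : ∑ i, w i ^ 2 = 1 := by simpa only [dotProduct, sq] using hw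
    simp only [sub_mul, Finset.sum_sub_distrib, ← Finset.mul_sum, hw']
    ring
  have hrest : 0 ≤ ∑ i ∈ Finset.univ.erase i₀, (μ i - b) * w i ^ 2 :=
    Finset.sum_nonneg fun i hi =>
      mul_nonneg (sub_nonneg.mpr (hμ i (Finset.ne_of_mem_erase hi))) (sq_nonneg _)
  rw [hsum, ← Finset.add_sum_erase _ _ (Finset.mem_univ i₀)]
  linarith

theorem mul_le_sum_mul_sq_mul_sum_mul_sq [DecidableEq n] {μ : n → ℝ} {i₀ : n} {b : ℝ}
    (h₀ : 0 ≤ μ i₀) (hb : μ i₀ ≤ b) (hμ : ∀ i ≠ i₀, b ≤ μ i)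
    {w₁ w₂ : n → ℝ} (h₁ : w₁ ⬝ᵥ w₁ = 1) (h₂ : w₂ ⬝ᵥ w₂ = 1) (h₁₂ : w₁ ⬝ᵥ w₂ = 0) :
    μ i₀ * b ≤ (∑ i, μ i * w₁ i ^ 2) * (∑ i, μ i * w₂ i ^ 2) :=
  mul_le_mul_of_interpolants_le h₀ hb (sq_nonneg _) (sq_nonneg _)
    (sq_add_sq_apply_le_one_of_orthonormal h₁ h₂ h₁₂ i₀)
    (add_mul_one_sub_le_sum_mul_sq hμ h₁) (add_mul_one_sub_le_sum_mul_sq hμ h₂)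

end

theorem Tuple.apply_sort_one_le {α : Type*} [LinearOrder α] {n : ℕ} (hn : 1 < n)
    (f : Fin n → α) {i : Fin n} (hi : i ≠ Tuple.sort f ⟨0, by omega⟩) :
    f (Tuple.sort f ⟨1, hn⟩) ≤ f i := by
  obtain ⟨j, rfl⟩ := (Tuple.sort f).surjective i
  exact Tuple.monotone_sort f <|
    Fin.le_def.mpr <| Nat.one_le_iff_ne_zero.mpr fun h => hi (congrArg _ (Fin.ext h))

theorem eigUp_of_isHermitian {d : ℕ} {M : Matrix (Fin d) (Fin d) ℝ} (hM : M.IsHermitian)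
    (i : Fin d) : eigUp M i = hM.eigenvalues (Tuple.sort hM.eigenvalues i) := by
  simp only [eigUp, dif_pos hM, Function.comp_apply]

/-- For a real symmetric positive definite matrix `Ã` and orthonormal vectors `v₁, v₂`,
the product of Rayleigh quotients `⟨v₁, Ãv₁⟩⟨v₂, Ãv₂⟩` is at least the product of the
two smallest eigenvalues `α₁↑ α₂↑` of `Ã`. -/
theorem rayleigh_product_lower_bound (d : ℕ) (hd : 2 ≤ d)
    (Atil : Matrix (Fin d) (Fin d) ℝ) (hA : Atil.PosDef)
    (v₁ v₂ : Fin d → ℝ) (h1 : v₁ ⬝ᵥ v₁ = 1) (h2 : v₂ ⬝ᵥ v₂ = 1) (h12 : v₁ ⬝ᵥ v₂ = 0) :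
    eigUp Atil ⟨0, by omega⟩ * eigUp Atil ⟨1, by omega⟩ ≤
      (v₁ ⬝ᵥ Atil *ᵥ v₁) * (v₂ ⬝ᵥ Atil *ᵥ v₂) := by
  have hH := hA.isHermitian
  have hU : star (hH.eigenvectorUnitary : Matrix (Fin d) (Fin d) ℝ) ∈ unitaryGroup (Fin d) ℝ :=
    Unitary.star_mem hH.eigenvectorUnitary.2
  have hUiso := dotProduct_mulVec_mulVec_of_mem_unitaryGroup hU
  rw [eigUp_of_isHermitian hH, eigUp_of_isHermitian hH, hH.dotProduct_mulVec_self_eq_sum,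
    hH.dotProduct_mulVec_self_eq_sum]
  exact mul_le_sum_mul_sq_mul_sum_mul_sq (hA.eigenvalues_pos _).le
    (Tuple.monotone_sort hH.eigenvalues (Fin.le_def.mpr zero_le_one))
    (fun i hi => Tuple.apply_sort_one_le (by omega) _ hi)
    (by rw [hUiso, h1]) (by rw [hUiso, h2]) (by rw [hUiso, h12])
end

section
/- (Parametric system, maximal entanglement.) Fix N ≥ 0 and 0 ≤ χ < 1/2, and set M = [[0, σz],[σz, 0]] (4×4, with σz = diag(1,−1)), A = −(1/2)𝟙₄ + χM, and D = (1+2N)𝟙₄. Then Ã := −(A + Aᵀ) = 𝟙₄ − 2χM is positive definite, its two smallest eigenvalues both equal 1−2χ, and every real symmetric 4×4 matrix σ satisfying σ + iΩ ≥ 0 and Aσ + σAᵀ + D ≥ 0 has, for the 1 vs 1 bipartition, smallest partially transposed symplectic eigenvalue ν̃₋ ≥ (1−2χ)/(1+2N); equivalently its logarithmic negativity satisfies E_N(σ) ≤ log₂(1+2N) − log₂(1−2χ). -/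
open Matrix
open scoped ComplexOrder

/-!
Since `M` is a symmetric involution, `-(A + Aᵀ) = 𝟙 - 2χM ≥ (1 - 2χ) 𝟙`; testing the condition
`Aσ + σAᵀ + D ≥ 0` on an eigenvector of `σ` then gives `σ ≤ b 𝟙` with `b = (1 + 2N)/(1 - 2χ)`.
The uncertainty relation `σ + iΩ ≥ 0` turns this upper bound into `σ ≥ c 𝟙` with `c = b⁻¹`, and
since `Ω̃` is orthogonal, `σ^{1/2} Ω̃ᵀ σ Ω̃ σ^{1/2} ≥ c σ ≥ c² 𝟙`, so `ν̃₋ ≥ c`.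
The eigenvalues of `𝟙 - 2χM` are `1 ± 2χ`, each twice because `tr M = 0`.
-/

open scoped MatrixOrder

theorem posDef_of_smul_one_le {n : Type*} [DecidableEq n] {X : Matrix n n ℝ} {c : ℝ}
    (hc : 0 < c) (h : c • 1 ≤ X) : X.PosDef := by
  simpa using (PosDef.one.smul hc).add_posSemidef h

section QuadraticForms

variable {n : Type*} [Fintype n]

theorem dotProduct_mulVec_of_transpose_eq_neg {J : Matrix n n ℝ} (hJ : Jᵀ = -J) (x y : n → ℝ) :
    y ⬝ᵥ J *ᵥ x = -(x ⬝ᵥ J *ᵥ y) := by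
  rw [dotProduct_mulVec, ← mulVec_transpose, hJ, neg_mulVec, neg_dotProduct, dotProduct_comm]

theorem re_star_dotProduct_ofReal_add_I_smul_mulVec (σ J : Matrix n n ℝ) (x y : n → ℝ) :
    (star (fun j => (x j : ℂ) + Complex.I * y j) ⬝ᵥ
        (σ.map (Complex.ofReal ·) + Complex.I • J.map (Complex.ofReal ·)) *ᵥ
          fun j => (x j : ℂ) + Complex.I * y j).re =
      x ⬝ᵥ σ *ᵥ x + y ⬝ᵥ σ *ᵥ y - x ⬝ᵥ J *ᵥ y + y ⬝ᵥ J *ᵥ x := by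
  simp only [dotProduct, mulVec, Finset.mul_sum, ← Finset.sum_add_distrib,
    ← Finset.sum_sub_distrib, Complex.re_sum]
  refine Finset.sum_congr rfl fun i _ => Finset.sum_congr rfl fun j _ => ?_
  simp only [Pi.star_apply, star_add, star_mul', RCLike.star_def, Complex.conj_ofReal,
    Complex.conj_I, Matrix.add_apply, map_apply, Matrix.smul_apply, smul_eq_mul,
    Complex.mul_re, Complex.mul_im, Complex.add_re, Complex.add_im, Complex.neg_re,
    Complex.neg_im, Complex.ofReal_re, Complex.ofReal_im, Complex.I_re, Complex.I_im]
  ring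

theorem two_mul_dotProduct_mulVec_le {σ J : Matrix n n ℝ} (hJ : Jᵀ = -J)
    (h : (σ.map (Complex.ofReal ·) + Complex.I • J.map (Complex.ofReal ·)).PosSemidef)
    (x y : n → ℝ) : 2 * (x ⬝ᵥ J *ᵥ y) ≤ x ⬝ᵥ σ *ᵥ x + y ⬝ᵥ σ *ᵥ y := by
  have hre := h.re_dotProduct_nonneg fun j => (x j : ℂ) + Complex.I * y j
  rw [RCLike.re_to_complex, re_star_dotProduct_ofReal_add_I_smul_mulVec,
    dotProduct_mulVec_of_transpose_eq_neg hJ x y] at hre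
  linarith

theorem posSemidef_of_posSemidef_add_I_smul {σ J : Matrix n n ℝ} (hσ : σ.IsSymm)
    (hJ : Jᵀ = -J)
    (h : (σ.map (Complex.ofReal ·) + Complex.I • J.map (Complex.ofReal ·)).PosSemidef) :
    σ.PosSemidef := by
  refine .of_dotProduct_mulVec_nonneg (by simpa [IsHermitian] using hσ.eq) fun x => ?_
  simpa using two_mul_dotProduct_mulVec_le hJ h x 0

variable [DecidableEq n]

theorem dotProduct_mulVec_self_of_transpose_mul_self {J : Matrix n n ℝ} (hJJ : Jᵀ * J = 1)
    (v : n → ℝ) : (J *ᵥ v) ⬝ᵥ (J *ᵥ v) = v ⬝ᵥ v := by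
  nth_rw 1 [← vecMul_transpose]
  rw [← dotProduct_mulVec, mulVec_mulVec, hJJ, one_mulVec]

theorem smul_one_le_iff {σ : Matrix n n ℝ} (hσ : σ.IsSymm) (b : ℝ) :
    b • 1 ≤ σ ↔ ∀ w, b * (w ⬝ᵥ w) ≤ w ⬝ᵥ σ *ᵥ w := by
  have herm : (σ - b • 1).IsHermitian :=
    IsHermitian.sub (by simpa [IsHermitian] using hσ.eq)
      (isHermitian_one.smul (IsSelfAdjoint.all b))
  simp only [le_iff, posSemidef_iff_dotProduct_mulVec, herm, true_and, star_trivial,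
    sub_mulVec, smul_mulVec, one_mulVec, dotProduct_sub, dotProduct_smul, smul_eq_mul, sub_nonneg]

theorem le_smul_one_iff {σ : Matrix n n ℝ} (hσ : σ.IsSymm) (b : ℝ) :
    σ ≤ b • 1 ↔ ∀ w, w ⬝ᵥ σ *ᵥ w ≤ b * (w ⬝ᵥ w) := by
  have herm : (b • 1 - σ).IsHermitian :=
    IsHermitian.sub (isHermitian_one.smul (IsSelfAdjoint.all b))
      (by simpa [IsHermitian] using hσ.eq)
  simp only [le_iff, posSemidef_iff_dotProduct_mulVec, herm, true_and, star_trivial,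
    sub_mulVec, smul_mulVec, one_mulVec, dotProduct_sub, dotProduct_smul, smul_eq_mul, sub_nonneg]

theorem exists_mulVec_eq_smul_of_mem_spectrum {X : Matrix n n ℝ} {μ : ℝ}
    (hμ : μ ∈ spectrum ℝ X) : ∃ v ≠ 0, X *ᵥ v = μ • v := by
  rw [← spectrum_toLin', ← Module.End.hasEigenvalue_iff_mem_spectrum] at hμ
  obtain ⟨v, hv⟩ := hμ.exists_hasEigenvector
  exact ⟨v, hv.2, by simpa using hv.apply_eq_smul⟩

/-- The uncertainty principle: testing `σ + iJ ≥ 0` on `v - i b⁻¹ J v`. -/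
theorem inv_smul_one_le_of_le_smul_one {σ J : Matrix n n ℝ} (hσ : σ.IsSymm) (hJ : Jᵀ = -J)
    (hJJ : Jᵀ * J = 1)
    (h : (σ.map (Complex.ofReal ·) + Complex.I • J.map (Complex.ofReal ·)).PosSemidef)
    {b : ℝ} (hb : 0 < b) (hσb : σ ≤ b • 1) : b⁻¹ • 1 ≤ σ := by
  rw [smul_one_le_iff hσ]
  intro v
  have hJv : (J *ᵥ v) ⬝ᵥ σ *ᵥ (J *ᵥ v) ≤ b * (v ⬝ᵥ v) := by
    rw [← dotProduct_mulVec_self_of_transpose_mul_self hJJ v]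
    exact (le_smul_one_iff hσ b).1 hσb _
  have hJJv : v ⬝ᵥ J *ᵥ (J *ᵥ v) = -(v ⬝ᵥ v) := by
    rw [dotProduct_mulVec_of_transpose_eq_neg hJ,
      dotProduct_mulVec_self_of_transpose_mul_self hJJ]
  have key := two_mul_dotProduct_mulVec_le hJ h v (-b⁻¹ • J *ᵥ v)
  simp only [mulVec_smul, dotProduct_smul, smul_dotProduct, hJJv, smul_eq_mul] at key
  have hb' := mul_le_mul_of_nonneg_left ((inv_mul_le_iff₀ hb).2 hJv) (inv_nonneg.2 hb.le)
  linarith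

/-- On an eigenvector `v` of `σ` with eigenvalue `μ ≥ 0`, the hypotheses give
`0 ≤ (K - a μ) ‖v‖²`. -/
theorem le_smul_one_of_lyapunov {σ A : Matrix n n ℝ} {a K : ℝ} (ha : 0 < a)
    (hσ : σ.PosSemidef) (hA : a • 1 ≤ -(A + Aᵀ)) (h : (A * σ + σ * Aᵀ + K • 1).PosSemidef) :
    σ ≤ (K / a) • 1 := by
  rw [← Algebra.algebraMap_eq_smul_one, le_algebraMap_iff_spectrum_le hσ.isHermitian]
  intro μ hμ
  obtain ⟨v, hv0, hv⟩ := exists_mulVec_eq_smul_of_mem_spectrum hμ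
  have hμ0 : 0 ≤ μ := (posSemidef_iff_isHermitian_and_spectrum_nonneg.1 hσ).2 hμ
  have hvv : 0 < v ⬝ᵥ v := by simpa using dotProduct_self_star_pos_iff.2 hv0
  have hAv := (smul_one_le_iff (isSymm_add_transpose_self A).neg a).1 hA v
  have hAσ : v ⬝ᵥ (A * σ) *ᵥ v = μ * (v ⬝ᵥ A *ᵥ v) := by
    rw [← mulVec_mulVec, hv, mulVec_smul, dotProduct_smul, smul_eq_mul]
  have hσA : v ⬝ᵥ (σ * Aᵀ) *ᵥ v = μ * (v ⬝ᵥ Aᵀ *ᵥ v) := by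
    rw [← mulVec_mulVec, dotProduct_mulVec, ← mulVec_transpose,
      ← conjTranspose_eq_transpose_of_trivial, hσ.1, hv, smul_dotProduct, smul_eq_mul]
  have hstat := h.dotProduct_mulVec_nonneg v
  simp only [star_trivial, add_mulVec, dotProduct_add, hAσ, hσA, smul_mulVec, one_mulVec,
    dotProduct_smul, smul_eq_mul] at hstat
  simp only [neg_mulVec, add_mulVec, dotProduct_neg, dotProduct_add] at hAv
  rw [le_div_iff₀ ha]
  nlinarith

end QuadraticForms

section Involution

variable {n : Type*} [Fintype n] [DecidableEq n] {M : Matrix n n ℝ}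

theorem smul_one_le_one_sub_smul (hM : Mᵀ = M) (hMM : M * M = 1) {t : ℝ} (ht : 0 ≤ t) :
    (1 - t) • 1 ≤ 1 - t • M := by
  have hsq : (1 - M)ᴴ * (1 - M) = (2 : ℝ) • (1 - M) := by
    rw [conjTranspose_eq_transpose_of_trivial, transpose_sub, transpose_one, hM, sub_mul,
      one_mul, mul_sub, mul_one, hMM]
    module
  have hdiff : 1 - t • M - (1 - t) • 1 = (t / 2) • ((1 - M)ᴴ * (1 - M)) := by
    rw [hsq]
    module
  rw [le_iff, hdiff]
  exact (posSemidef_conjTranspose_mul_self _).smul (by positivity)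

theorem eq_one_sub_or_eq_one_add_of_mem_spectrum (hMM : M * M = 1) {t μ : ℝ}
    (hμ : μ ∈ spectrum ℝ (1 - t • M)) : μ = 1 - t ∨ μ = 1 + t := by
  obtain ⟨v, hv0, hv⟩ := exists_mulVec_eq_smul_of_mem_spectrum hμ
  have hMv : (t • M) *ᵥ v = (1 - μ) • v := by
    rw [sub_smul, one_smul, ← hv, sub_mulVec, one_mulVec, sub_sub_cancel]
  have hsq : (t ^ 2 - (1 - μ) ^ 2) • v = 0 := by
    have h2 : (t • M) *ᵥ ((t • M) *ᵥ v) = t ^ 2 • v := by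
      rw [mulVec_mulVec, smul_mul_smul_comm, hMM, smul_mulVec, one_mulVec, pow_two]
    rw [hMv, mulVec_smul, hMv, smul_smul, ← pow_two] at h2
    rw [sub_smul, h2, sub_self]
  have hμt : (1 - μ) ^ 2 = t ^ 2 :=
    (sub_eq_zero.1 ((smul_eq_zero.1 hsq).resolve_right hv0)).symm
  rcases sq_eq_sq_iff_eq_or_eq_neg.1 hμt with h | h
  · left; linarith
  · right; linarith

end Involution

section EigUp

variable {d : ℕ} {X : Matrix (Fin d) (Fin d) ℝ}

theorem Matrix.IsHermitian.eigUp_eq (hX : X.IsHermitian) :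
    eigUp X = hX.eigenvalues ∘ Tuple.sort hX.eigenvalues :=
  dif_pos hX

theorem Matrix.IsHermitian.monotone_eigUp (hX : X.IsHermitian) : Monotone (eigUp X) := by
  rw [hX.eigUp_eq]
  exact Tuple.monotone_sort _

theorem Matrix.IsHermitian.eigUp_mem_spectrum (hX : X.IsHermitian) (i : Fin d) :
    eigUp X i ∈ spectrum ℝ X := by
  rw [hX.eigUp_eq]
  exact hX.eigenvalues_mem_spectrum_real _

theorem Matrix.IsHermitian.sum_eigUp (hX : X.IsHermitian) : ∑ i, eigUp X i = X.trace := by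
  rw [hX.eigUp_eq, hX.trace_eq_sum_eigenvalues]
  exact Equiv.sum_comp _ _

end EigUp

theorem eq_of_monotone_of_sum_eq_fin_four {g : Fin 4 → ℝ} {a b : ℝ} (hg : Monotone g)
    (hab : a ≤ b) (hval : ∀ i, g i = a ∨ g i = b) (hsum : ∑ i, g i = 2 * a + 2 * b) :
    g 0 = a ∧ g 1 = a := by
  rw [Fin.sum_univ_four] at hsum
  have h01 : g 0 ≤ g 1 := hg (by decide)
  have h12 : g 1 ≤ g 2 := hg (by decide)
  have h23 : g 2 ≤ g 3 := hg (by decide)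
  rcases hval 0 with h0 | h0 <;> rcases hval 1 with h1 | h1 <;> rcases hval 2 with h2 | h2 <;>
    rcases hval 3 with h3 | h3 <;> constructor <;> linarith

theorem eigUp_one_sub_smul_of_involution {M : Matrix (Fin 4) (Fin 4) ℝ} (hM : Mᵀ = M)
    (hMM : M * M = 1) (htr : M.trace = 0) {t : ℝ} (ht : 0 ≤ t) :
    eigUp (1 - t • M) 0 = 1 - t ∧ eigUp (1 - t • M) 1 = 1 - t := by
  have hX : (1 - t • M).IsHermitian := by
    simp [IsHermitian, conjTranspose_eq_transpose_of_trivial, hM]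
  refine eq_of_monotone_of_sum_eq_fin_four hX.monotone_eigUp (by linarith)
    (fun i => eq_one_sub_or_eq_one_add_of_mem_spectrum hMM (hX.eigUp_mem_spectrum i)) ?_
  rw [hX.sum_eigUp, trace_sub, trace_smul, htr, trace_one]
  norm_num
  ring

section SymplecticEigenvalue

theorem msqrt_eq_sqrt {d : ℕ} {σ : Matrix (Fin d) (Fin d) ℝ} (hσ : σ.PosSemidef) :
    msqrt σ = CFC.sqrt σ := by
  rw [CFC.sqrt_eq_real_sqrt σ hσ.nonneg, cfcₙ_eq_cfc, hσ.1.cfc_eq, IsHermitian.cfc, msqrt,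
    dif_pos hσ]
  rfl

theorem le_csInf_spectrum_of_smul_one_le {d : ℕ} [NeZero d] {B : Matrix (Fin d) (Fin d) ℝ}
    {c : ℝ} (h : c • 1 ≤ B) : c ≤ sInf (spectrum ℝ B) := by
  have hB : B.IsHermitian := by
    simpa using h.1.add (isHermitian_one.smul (IsSelfAdjoint.all c))
  rw [← Algebra.algebraMap_eq_smul_one, algebraMap_le_iff_le_spectrum hB] at h
  exact le_csInf (ContinuousFunctionalCalculus.spectrum_nonempty B hB) h

variable {n l : ℕ} {σ : Matrix (Fin (2*n)) (Fin (2*n)) ℝ} {c : ℝ}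

theorem sq_le_nuSq [NeZero n] (hW : (OmegaPT n l)ᵀ * OmegaPT n l = 1) (hc : 0 ≤ c)
    (hσ : c • 1 ≤ σ) : c ^ 2 ≤ nuSq n l σ := by
  have hσ0 : 0 ≤ σ := (smul_nonneg hc zero_le_one).trans hσ
  set W := OmegaPT n l
  set S := CFC.sqrt σ
  have hW' : star W * W = 1 := by
    rwa [star_eq_conjTranspose, conjTranspose_eq_transpose_of_trivial]
  have hSS : S * S = σ := CFC.sqrt_mul_sqrt_self σ hσ0
  have hS : IsSelfAdjoint S := (CFC.sqrt_nonneg σ).isSelfAdjoint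
  have h1 : c • 1 ≤ star W * σ * W := by
    simpa [hW'] using star_left_conjugate_le_conjugate hσ W
  have h2 : c • σ ≤ S * (star W * σ * W) * S := by
    simpa [hSS] using hS.conjugate_le_conjugate h1
  have h3 : (c ^ 2) • 1 ≤ c • σ := by
    simpa [pow_two, smul_smul] using smul_le_smul_of_nonneg_left hσ hc
  rw [nuSq, msqrt_eq_sqrt hσ0.posSemidef]
  refine le_csInf_spectrum_of_smul_one_le (h3.trans ?_)
  simpa [star_eq_conjTranspose, Matrix.mul_assoc] using h2

theorem le_nuMin [NeZero n] (hW : (OmegaPT n l)ᵀ * OmegaPT n l = 1) (hc : 0 ≤ c)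
    (hσ : c • 1 ≤ σ) : c ≤ nuMin n l σ :=
  Real.le_sqrt_of_sq_le (sq_le_nuSq hW hc hσ)

theorem logNeg_le_neg_logb (hc : 0 < c) (hc1 : c ≤ 1) (h : c ≤ nuMin n l σ) :
    logNeg n l σ ≤ -Real.logb 2 c :=
  max_le (neg_nonneg.2 (Real.logb_nonpos one_lt_two hc.le hc1))
    (neg_le_neg ((Real.logb_le_logb one_lt_two hc (hc.trans_le h)).2 h))

end SymplecticEigenvalue

section TwoModes

theorem omega_two : Omega 2 = !![0, 1, 0, 0; -1, 0, 0, 0; 0, 0, 0, 1; 0, 0, -1, 0] := by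
  ext i j
  fin_cases i <;> fin_cases j <;> norm_num [Omega]

theorem transpose_omega_two : (Omega 2)ᵀ = -Omega 2 := by
  rw [omega_two]
  ext i j
  fin_cases i <;> fin_cases j <;> simp

theorem transpose_omega_two_mul_self : (Omega 2)ᵀ * Omega 2 = 1 := by
  rw [omega_two]
  ext i j
  fin_cases i <;> fin_cases j <;> simp [mul_apply, Fin.sum_univ_four, one_apply]

theorem transpose_omegaPT_two_one_mul_self : (OmegaPT 2 1)ᵀ * OmegaPT 2 1 = 1 := by
  have hT : Tmat 2 1 = diagonal ![1, 1, 1, -1] := by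
    rw [Tmat]
    congr 1
    ext i
    fin_cases i <;> simp
  rw [OmegaPT, hT, omega_two]
  ext i j
  fin_cases i <;> fin_cases j <;> simp [mul_apply, Fin.sum_univ_four, one_apply]

def sigmaZCoupling : Matrix (Fin 4) (Fin 4) ℝ :=
  !![0, 0, 1, 0; 0, 0, 0, -1; 1, 0, 0, 0; 0, -1, 0, 0]

theorem transpose_sigmaZCoupling : sigmaZCouplingᵀ = sigmaZCoupling := by
  ext i j
  fin_cases i <;> fin_cases j <;> simp [sigmaZCoupling]

theorem sigmaZCoupling_mul_self : sigmaZCoupling * sigmaZCoupling = 1 := by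
  ext i j
  fin_cases i <;> fin_cases j <;>
    simp [sigmaZCoupling, mul_apply, Fin.sum_univ_four, one_apply]

theorem trace_sigmaZCoupling : sigmaZCoupling.trace = 0 := by
  simp [sigmaZCoupling, trace, Fin.sum_univ_four]

end TwoModes

/-- **Parametric system, maximal entanglement.** For the degenerate parametric dynamics
`A = −(1/2)𝟙₄ + χM`, `D = (1+2N)𝟙₄` with `M = [[0,σz],[σz,0]]` and `0 ≤ χ < 1/2`:
`Ã = 𝟙₄ − 2χM` is positive definite with its two smallest eigenvalues equal to `1−2χ`, and
every covariance matrix `σ` satisfying `Aσ + σAᵀ + D ≥ 0` has, for the 1 vs 1 bipartition,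
`ν̃₋ ≥ (1−2χ)/(1+2N)`, equivalently `E_N(σ) ≤ log₂(1+2N) − log₂(1−2χ)`. -/
theorem parametric_system_maximal_entanglement (N χ : ℝ) (hN : 0 ≤ N)
    (hχ0 : 0 ≤ χ) (hχ : χ < 1/2)
    (M A D : Matrix (Fin (2*2)) (Fin (2*2)) ℝ)
    (hM : M = !![0,0,1,0; 0,0,0,-1; 1,0,0,0; 0,-1,0,0])
    (hA : A = (-(1/2) : ℝ) • 1 + χ • M) (hD : D = (1 + 2*N) • 1) :
    (-(A + Aᵀ)).PosDef ∧ -(A + Aᵀ) = 1 - (2*χ) • M ∧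
    eigUp (-(A + Aᵀ)) ⟨0, by omega⟩ = 1 - 2*χ ∧
    eigUp (-(A + Aᵀ)) ⟨1, by omega⟩ = 1 - 2*χ ∧
    ∀ σ : Matrix (Fin (2*2)) (Fin (2*2)) ℝ, IsCM 2 σ →
      (A * σ + σ * Aᵀ + D).PosSemidef →
      (1 - 2*χ) / (1 + 2*N) ≤ nuMin 2 1 σ ∧
        logNeg 2 1 σ ≤ Real.logb 2 (1+2*N) - Real.logb 2 (1-2*χ) := by
  have hMc : M = sigmaZCoupling := hM
  have hMT : Mᵀ = M := hMc ▸ transpose_sigmaZCoupling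
  have hMM : M * M = 1 := hMc ▸ sigmaZCoupling_mul_self
  have hÃ : -(A + Aᵀ) = 1 - (2 * χ) • M := by
    rw [hA, transpose_add, transpose_smul, transpose_smul, transpose_one, hMT]
    module
  have hgap : 0 < 1 - 2 * χ := by linarith
  have hK : 0 < 1 + 2 * N := by linarith
  have hÃle : (1 - 2 * χ) • 1 ≤ -(A + Aᵀ) := hÃ ▸ smul_one_le_one_sub_smul hMT hMM (by linarith)
  obtain ⟨heig₀, heig₁⟩ := eigUp_one_sub_smul_of_involution hMT hMM (hMc ▸ trace_sigmaZCoupling)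
    (t := 2 * χ) (by linarith)
  refine ⟨posDef_of_smul_one_le hgap hÃle, hÃ, hÃ ▸ heig₀, hÃ ▸ heig₁, fun σ ⟨hσs, hσΩ⟩ hstat => ?_⟩
  have hσ : σ.PosSemidef := posSemidef_of_posSemidef_add_I_smul hσs transpose_omega_two hσΩ
  have hupper : σ ≤ ((1 + 2 * N) / (1 - 2 * χ)) • 1 :=
    le_smul_one_of_lyapunov hgap hσ hÃle (hD ▸ hstat)
  have hlower : ((1 - 2 * χ) / (1 + 2 * N)) • 1 ≤ σ := by
    simpa using inv_smul_one_le_of_le_smul_one hσs transpose_omega_two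
      transpose_omega_two_mul_self hσΩ (by positivity) hupper
  have hν := le_nuMin transpose_omegaPT_two_one_mul_self (by positivity) hlower
  refine ⟨hν, (logNeg_le_neg_logb (by positivity) ((div_le_one hK).2 (by linarith)) hν).trans_eq ?_⟩
  rw [Real.logb_div hgap.ne' hK.ne']
  ring
end
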